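/- For m ≡ 1, the potential ω_1(z) = ∫_ℝ (log|1-z/t| + χ(t)·Re(z)/t) dt equals π|Im z| for all z ∈ ℂ. -/

import Mathlib

open MeasureTheory

/-- `χ(t) = 1 - 1_{[-1,1]}(t)`. -/
noncomputable def chi (t : ℝ) : ℝ := if t ∈ Set.Icc (-1 : ℝ) 1 then 0 else 1

/-!
Write `z = x + iy`. Away from `t = 0` and `t = z` the kernel is
`log ‖t - z‖ - log |t| + χ(t) x / t`; the last term is odd, and `log ‖t - z‖` has the explicit
primitive `(t - x) log ‖t - z‖ + y arctan ((t - x) / y) - t`. Hence the integral over `[-R, R]`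
splits into two terms of the form `(R ∓ x) log ‖1 ∓ z / R‖ + y arctan ((R ∓ x) / y)`, which tend to
`∓x + π |y| / 2` because `log ‖1 + w‖ = Re w + O(‖w‖²)`. The same expansion bounds the kernel by
`‖z‖² / t²` for large `|t|`, so it is integrable and its integral is the limit `π |y|` of the
symmetric integrals.
-/

open Real Filter Set Topology intervalIntegral

theorem intervalIntegral.integral_eq_zero_of_odd {E : Type*} [NormedAddCommGroup E]
    [NormedSpace ℝ E] {f : ℝ → E} (hf : ∀ t, f (-t) = -f t) (R : ℝ) :
    ∫ t in -R..R, f t = 0 := by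
  have h : ∫ t in -R..R, f (-t) = ∫ t in -R..R, f t := by simp
  simp only [hf, integral_neg] at h
  have htwice : (2 : ℝ) • ∫ t in -R..R, f t = 0 := by
    rw [two_smul]
    nth_rw 1 [← h]
    exact neg_add_cancel _
  exact (smul_eq_zero.mp htwice).resolve_left two_ne_zero

lemma chi_neg (t : ℝ) : chi (-t) = chi t := by
  simp [chi, and_comm, neg_le]

lemma chi_eq_one {t : ℝ} (ht : 1 < |t|) : chi t = 1 :=
  if_neg fun h => ht.not_ge (abs_le.2 h)

@[fun_prop]
lemma measurable_chi : Measurable chi :=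
  Measurable.ite measurableSet_Icc measurable_const measurable_const

lemma abs_chi_mul_div_le (c t : ℝ) : |chi t * c / t| ≤ |c| := by
  by_cases ht : 1 < |t|
  · rw [chi_eq_one ht, one_mul, abs_div]
    exact div_le_self (abs_nonneg c) ht.le
  · have : chi t = 0 := if_pos (abs_le.1 (not_lt.1 ht))
    simp [this]

lemma intervalIntegrable_chi_mul_div (c a b : ℝ) :
    IntervalIntegrable (fun t => chi t * c / t) volume a b := by
  refine (intervalIntegrable_const (c := |c|)).mono_fun'
    (by fun_prop : Measurable fun t => chi t * c / t).aestronglyMeasurable ?_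
  exact Eventually.of_forall fun t => abs_chi_mul_div_le c t

lemma integral_chi_mul_div_symmetric (c R : ℝ) : ∫ t in -R..R, chi t * c / t = 0 :=
  integral_eq_zero_of_odd (fun t => by rw [chi_neg, div_neg]) R

lemma abs_log_norm_one_add_sub_re_le {w : ℂ} (hw : ‖w‖ ≤ 1 / 2) :
    |log ‖1 + w‖ - w.re| ≤ ‖w‖ ^ 2 := by
  have hinv : (1 - ‖w‖)⁻¹ ≤ 2 := by
    rw [inv_le_comm₀ (by linarith) (by norm_num)]
    linarith
  calc |log ‖1 + w‖ - w.re| = |(Complex.log (1 + w) - w).re| := by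
        rw [Complex.sub_re, Complex.log_re]
    _ ≤ ‖Complex.log (1 + w) - w‖ := Complex.abs_re_le_norm _
    _ ≤ ‖w‖ ^ 2 * (1 - ‖w‖)⁻¹ / 2 := Complex.norm_log_one_add_sub_self_le (by linarith)
    _ ≤ ‖w‖ ^ 2 := by nlinarith [sq_nonneg ‖w‖]

lemma abs_log_norm_one_sub_div_add_re_div_le (z : ℂ) {t : ℝ} (ht : 2 * ‖z‖ ≤ |t|) :
    |log ‖1 - z / t‖ + z.re / t| ≤ ‖z‖ ^ 2 / t ^ 2 := by
  have hnorm : ‖-(z / t)‖ = ‖z‖ / |t| := by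
    rw [norm_neg, norm_div, Complex.norm_real, Real.norm_eq_abs]
  have hw : ‖-(z / t)‖ ≤ 1 / 2 := by
    rw [hnorm]
    exact div_le_of_le_mul₀ (abs_nonneg t) (by norm_num) (by linarith)
  have h := abs_log_norm_one_add_sub_re_le hw
  rwa [← sub_eq_add_neg, Complex.neg_re, Complex.div_ofReal_re, sub_neg_eq_add, hnorm, div_pow,
    sq_abs] at h

lemma log_norm_one_sub_div (z : ℂ) {t : ℝ} (ht : t ≠ 0) (htz : (t : ℂ) ≠ z) :
    log ‖1 - z / t‖ = log ‖(t : ℂ) - z‖ - log t := by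
  have htC : (t : ℂ) ≠ 0 := Complex.ofReal_ne_zero.2 ht
  rw [← div_self htC, ← sub_div, norm_div, Complex.norm_real, Real.norm_eq_abs,
    Real.log_div (norm_ne_zero_iff.2 (sub_ne_zero.2 htz)) (abs_ne_zero.2 ht), Real.log_abs]

lemma tendsto_mul_log_norm_one_sub_div (z : ℂ) :
    Tendsto (fun R : ℝ => (R - z.re) * log ‖1 - z / R‖) atTop (𝓝 (-z.re)) := by
  have hmul : Tendsto (fun R : ℝ => R * log ‖1 - z / R‖) atTop (𝓝 (-z.re)) := by
    have hdecay : Tendsto (fun R : ℝ => ‖z‖ ^ 2 / R) atTop (𝓝 0) :=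
      tendsto_const_nhds.div_atTop tendsto_id
    rw [← tendsto_sub_nhds_zero_iff]
    refine squeeze_zero_norm' ?_ hdecay
    filter_upwards [eventually_ge_atTop (2 * ‖z‖), eventually_gt_atTop 0] with R hR hR0
    have h := abs_log_norm_one_sub_div_add_re_div_le z (t := R) (by rwa [abs_of_pos hR0])
    calc ‖R * log ‖1 - z / R‖ - -z.re‖ = |R * (log ‖1 - z / R‖ + z.re / R)| := by
          rw [Real.norm_eq_abs, mul_add, mul_div_cancel₀ _ hR0.ne', sub_neg_eq_add]
      _ = R * |log ‖1 - z / R‖ + z.re / R| := by rw [abs_mul, abs_of_pos hR0]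
      _ ≤ R * (‖z‖ ^ 2 / R ^ 2) := by gcongr
      _ = ‖z‖ ^ 2 / R := by field_simp
  have hlog : Tendsto (fun R : ℝ => log ‖1 - z / R‖) atTop (𝓝 0) := by
    have := hmul.mul tendsto_inv_atTop_zero
    rw [mul_zero] at this
    refine this.congr' ?_
    filter_upwards [eventually_gt_atTop 0] with R hR0
    field_simp
  have := hmul.sub (hlog.const_mul z.re)
  rw [mul_zero, sub_zero] at this
  exact this.congr fun R => by ring

lemma tendsto_mul_arctan_div (y : ℝ) :
    Tendsto (fun u => y * arctan (u / y)) atTop (𝓝 (π / 2 * |y|)) := by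
  rcases lt_trichotomy y 0 with hy | rfl | hy
  · have h := (tendsto_nhds_of_tendsto_nhdsWithin tendsto_arctan_atBot).comp
      (tendsto_id.atTop_div_const_of_neg hy)
    rw [abs_of_neg hy, show π / 2 * -y = y * -(π / 2) by ring]
    exact h.const_mul y
  · simp
  · have h := (tendsto_nhds_of_tendsto_nhdsWithin tendsto_arctan_atTop).comp
      (tendsto_id.atTop_div_const hy)
    rw [abs_of_pos hy, mul_comm]
    exact h.const_mul y

lemma intervalIntegrable_log_norm_ofReal_sub (z : ℂ) (a b : ℝ) :
    IntervalIntegrable (fun t : ℝ => log ‖(t : ℂ) - z‖) volume a b :=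
  MeromorphicOn.intervalIntegrable_log_norm fun t _ =>
    ((Complex.ofRealCLM.analyticAt t).sub analyticAt_const).meromorphicAt

lemma log_norm_ofReal_sub (z : ℂ) (t : ℝ) :
    log ‖(t : ℂ) - z‖ = log ((t - z.re) ^ 2 + z.im ^ 2) / 2 := by
  have hsq : ‖(t : ℂ) - z‖ ^ 2 = (t - z.re) ^ 2 + z.im ^ 2 := by
    rw [Complex.sq_norm, Complex.normSq_apply]
    simp only [Complex.sub_re, Complex.sub_im, Complex.ofReal_re, Complex.ofReal_im]
    ring
  rw [← hsq, Real.log_pow]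
  push_cast
  ring

/-- For `z.im = 0` the middle term is `0` (division by zero), and this is the usual primitive
`(t - x) log |t - x| - t` of `log |t - x|`. -/
noncomputable def logNormSubPrimitive (z : ℂ) (t : ℝ) : ℝ :=
  (t - z.re) * log ‖(t : ℂ) - z‖ + z.im * arctan ((t - z.re) / z.im) - t

lemma logNormSubPrimitive_neg (z : ℂ) (t : ℝ) :
    logNormSubPrimitive z (-t) = -logNormSubPrimitive (-z) t := by
  have hnorm : ‖((-t : ℝ) : ℂ) - z‖ = ‖(t : ℂ) - -z‖ := by
    rw [← norm_neg]
    push_cast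
    ring_nf
  simp only [logNormSubPrimitive, hnorm, Complex.neg_re, Complex.neg_im]
  rw [show (-t - z.re) / z.im = (t - -z.re) / -z.im by ring]
  ring

lemma hasDerivAt_logNormSubPrimitive {z : ℂ} (hz : z.im ≠ 0) (t : ℝ) :
    HasDerivAt (logNormSubPrimitive z) (log ‖(t : ℂ) - z‖) t := by
  set x := z.re
  set y := z.im
  have hD : (t - x) ^ 2 + y ^ 2 ≠ 0 := by positivity
  have hF : logNormSubPrimitive z =
      fun t => (t - x) * (log ((t - x) ^ 2 + y ^ 2) / 2) + y * arctan ((t - x) / y) - t := by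
    ext s
    rw [logNormSubPrimitive, log_norm_ofReal_sub]
  have hsub : HasDerivAt (fun t : ℝ => t - x) 1 t := (hasDerivAt_id t).sub_const x
  have hlog : HasDerivAt (fun t : ℝ => log ((t - x) ^ 2 + y ^ 2))
      (2 * (t - x) / ((t - x) ^ 2 + y ^ 2)) t := by
    convert ((hsub.fun_pow 2).add_const (y ^ 2)).log hD using 1
    ring
  have harctan := (hsub.div_const y).arctan
  rw [hF]
  refine (((hsub.mul (hlog.div_const 2)).add (harctan.const_mul y)).sub
    (hasDerivAt_id t)).congr_deriv ?_
  rw [log_norm_ofReal_sub]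
  field_simp
  ring

lemma integral_log_norm_ofReal_sub (z : ℂ) (a b : ℝ) :
    ∫ t in a..b, log ‖(t : ℂ) - z‖ = logNormSubPrimitive z b - logNormSubPrimitive z a := by
  by_cases hz : z.im = 0
  · have hlog : ∀ t : ℝ, log ‖(t : ℂ) - z‖ = log (t - z.re) := fun t => by
      rw [log_norm_ofReal_sub, hz, zero_pow two_ne_zero, add_zero, Real.log_pow]
      push_cast
      ring
    simp only [logNormSubPrimitive, hlog, hz, zero_mul, add_zero]
    rw [integral_comp_sub_right (fun t => log t), integral_log]
    ring
  · exact integral_eq_sub_of_hasDerivAt (fun t _ => hasDerivAt_logNormSubPrimitive hz t)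
      (intervalIntegrable_log_norm_ofReal_sub z a b)

lemma tendsto_logNormSubPrimitive_sub (z : ℂ) :
    Tendsto (fun R => logNormSubPrimitive z R - (R - z.re) * log R + R) atTop
      (𝓝 (-z.re + π / 2 * |z.im|)) := by
  have harctan := (tendsto_mul_arctan_div z.im).comp (tendsto_atTop_add_const_right _ (-z.re)
    tendsto_id)
  refine ((tendsto_mul_log_norm_one_sub_div z).add harctan).congr' ?_
  filter_upwards [eventually_gt_atTop ‖z‖, eventually_gt_atTop 0] with R hRz hR0
  have hRz' : (R : ℂ) ≠ z := fun h => by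
    rw [← h, Complex.norm_real, Real.norm_eq_abs, abs_of_pos hR0] at hRz
    exact lt_irrefl R hRz
  simp only [Function.comp, id, ← sub_eq_add_neg, logNormSubPrimitive,
    log_norm_one_sub_div z hR0.ne' hRz']
  ring

/-- The integrand of the potential `ω₁(z) = ∫ potentialKernel z t dt`. -/
noncomputable def potentialKernel (z : ℂ) (t : ℝ) : ℝ :=
  log ‖1 - z / (t : ℂ)‖ + chi t * z.re / t

lemma potentialKernel_ae_eq (z : ℂ) :
    potentialKernel z =ᵐ[volume] fun t => log ‖(t : ℂ) - z‖ - log t + chi t * z.re / t := by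
  have hfin : ({0, z.re} : Set ℝ).Finite := toFinite _
  filter_upwards [measure_eq_zero_iff_ae_notMem.1 (hfin.measure_zero volume)] with t ht
  simp only [mem_insert_iff, mem_singleton_iff, not_or] at ht
  have htz : (t : ℂ) ≠ z := fun h => ht.2 (by rw [← h, Complex.ofReal_re])
  rw [potentialKernel, log_norm_one_sub_div z ht.1 htz]

lemma intervalIntegrable_potentialKernel (z : ℂ) (a b : ℝ) :
    IntervalIntegrable (potentialKernel z) volume a b :=
  (((intervalIntegrable_log_norm_ofReal_sub z a b).sub intervalIntegrable_log').add
    (intervalIntegrable_chi_mul_div z.re a b)).congr_ae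
    (ae_restrict_of_ae (potentialKernel_ae_eq z).symm)

lemma integral_potentialKernel_symmetric (z : ℂ) (R : ℝ) :
    ∫ t in -R..R, potentialKernel z t =
      (logNormSubPrimitive z R - (R - z.re) * log R + R) +
        (logNormSubPrimitive (-z) R - (R - (-z).re) * log R + R) := by
  have hL := intervalIntegrable_log_norm_ofReal_sub z (-R) R
  have hchi := intervalIntegrable_chi_mul_div z.re (-R) R
  rw [integral_congr_ae ((potentialKernel_ae_eq z).mono fun t ht _ => ht),
    integral_add (hL.sub intervalIntegrable_log') hchi, integral_sub hL intervalIntegrable_log',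
    integral_log_norm_ofReal_sub, integral_log, integral_chi_mul_div_symmetric,
    logNormSubPrimitive_neg, Real.log_neg_eq_log, Complex.neg_re]
  ring

lemma tendsto_integral_potentialKernel_symmetric (z : ℂ) :
    Tendsto (fun R => ∫ t in -R..R, potentialKernel z t) atTop (𝓝 (π * |z.im|)) := by
  have h := (tendsto_logNormSubPrimitive_sub z).add (tendsto_logNormSubPrimitive_sub (-z))
  rw [Complex.neg_re, Complex.neg_im, abs_neg, show -z.re + π / 2 * |z.im| + (- -z.re +
    π / 2 * |z.im|) = π * |z.im| by ring] at h
  exact h.congr fun R => (integral_potentialKernel_symmetric z R).symm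

lemma abs_potentialKernel_le (z : ℂ) {t : ℝ} (ht : 1 < |t|) (htz : 2 * ‖z‖ ≤ |t|) :
    |potentialKernel z t| ≤ ‖z‖ ^ 2 / t ^ 2 := by
  rw [potentialKernel, chi_eq_one ht, one_mul]
  exact abs_log_norm_one_sub_div_add_re_div_le z htz

lemma integrable_potentialKernel (z : ℂ) : Integrable (potentialKernel z) := by
  set A := 2 * ‖z‖ + 2 with hA_def
  have hA : 2 ≤ A := by linarith [norm_nonneg z]
  have hcompact : IntegrableOn (potentialKernel z) (Icc (-A) A) := by
    rw [integrableOn_Icc_iff_integrableOn_Ioc, ← uIoc_of_le (by linarith)]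
    exact (intervalIntegrable_potentialKernel z (-A) A).def'
  have htail : IntegrableOn (potentialKernel z) (Icc (-A) A)ᶜ := by
    refine ((integrable_inv_one_add_sq.const_mul (2 * ‖z‖ ^ 2)).integrableOn).mono'
      (show Measurable (potentialKernel z) by
        unfold potentialKernel; fun_prop).aestronglyMeasurable
      ((ae_restrict_iff' measurableSet_Icc.compl).2 (Eventually.of_forall fun t ht => ?_))
    have htA : A < |t| := not_le.1 fun h => ht (abs_le.1 h)
    have ht2 : 1 ≤ t ^ 2 := by nlinarith [sq_abs t, abs_nonneg t]
    calc ‖potentialKernel z t‖ ≤ ‖z‖ ^ 2 / t ^ 2 :=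
          abs_potentialKernel_le z (by linarith) (by linarith)
      _ ≤ 2 * ‖z‖ ^ 2 * (1 + t ^ 2)⁻¹ := by
          rw [div_eq_mul_inv, mul_comm 2, mul_assoc]
          gcongr
          rw [inv_le_comm₀ (by positivity) (by positivity), mul_inv, inv_inv]
          linarith
  simpa using hcompact.union htail

theorem stmt4 (z : ℂ) :
    (∫ t : ℝ, (Real.log ‖1 - z / (t : ℂ)‖ + chi t * z.re / t)) =
      Real.pi * |z.im| :=
  tendsto_nhds_unique
    (intervalIntegral_tendsto_integral (integrable_potentialKernel z) tendsto_neg_atTop_atBot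
      tendsto_id)
    (tendsto_integral_potentialKernel_symmetric z)
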